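/- Let ψ be the ℂ-algebra homomorphism from the polynomial ring ℂ[z_S, z_T, z₁₂, z₁₃, z₂₁, z₂₃, z₃₁, z₃₂] to the quotient ring R₀/I sending z_S, z_T, z_{ij} respectively to the residue classes of S, T, P_{ij}. Then the kernel of ψ is the principal ideal generated by z_S·z_T − z₁₂·z₂₃·z₃₁ − z₁₃·z₂₁·z₃₂. (This gives the presentation of the algebra R₃(sl₃(ℂ)) of sl₃(ℂ)-invariants in triple tensor products.) -/

import Mathlib

/-!
Since `(P_{ij}) = XᵀY`, we have `S·T = det (P_{ij})`, and modulo the diagonal entries `P_{ii}`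
this determinant is `P₁₂P₂₃P₃₁ + P₁₃P₂₁P₃₂`; so the relation `f` lies in the kernel.
Conversely, `f = z_T·z_S - (z₁₂z₂₃z₃₁ + z₁₃z₂₁z₃₂)` is linear in `z_S` with prime coefficient,
hence prime. Every zero `z` of `f` with `z_S ≠ 0` comes from a zero of `I`: take
`x = diag(z_S, 1, 1)` and solve for `y` so that the `P_{ij}` take the prescribed off-diagonal
values; then `T = z_T` is forced by `S·T = det (P_{ij})`. Hence a kernel element `g` vanishes on
`V(f) \ {z_S = 0}`, so `z_S·g ∈ √(f) = (f)` by the Nullstellensatz, and `f ∤ z_S` gives `f ∣ g`.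
-/

open MvPolynomial

/-- `R₀`: the polynomial ring over `ℂ` in the 18 variables `x_{i,k}` (indexed by
`Sum.inl (i, k)`) and `y_{j,k}` (indexed by `Sum.inr (j, k)`), `i, j, k ∈ {1,2,3}`. -/
abbrev R0 : Type := MvPolynomial ((Fin 3 × Fin 3) ⊕ (Fin 3 × Fin 3)) ℂ

/-- `P_{ij} = Σ_k x_{i,k}·y_{j,k}`. -/
noncomputable def Pgen (i j : Fin 3) : R0 :=
  ∑ k : Fin 3, X (Sum.inl (i, k)) * X (Sum.inr (j, k))

/-- The ideal `I` generated by the diagonal elements `P₁₁, P₂₂, P₃₃`. -/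
noncomputable def Iid : Ideal R0 := Ideal.span {Pgen 0 0, Pgen 1 1, Pgen 2 2}

/-- `S`: the determinant of the `3×3` matrix whose `(k,i)` entry is `x_{i,k}`. -/
noncomputable def Sgen : R0 :=
  (Matrix.of fun k i : Fin 3 => (X (Sum.inl (i, k)) : R0)).det

/-- `T`: the determinant of the `3×3` matrix whose `(k,j)` entry is `y_{j,k}`. -/
noncomputable def Tgen : R0 :=
  (Matrix.of fun k j : Fin 3 => (X (Sum.inr (j, k)) : R0)).det

/-- The images in `R₀/I` of `S, T, P₁₂, P₁₃, P₂₁, P₂₃, P₃₁, P₃₂`, in the variable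
order `z_S, z_T, z₁₂, z₁₃, z₂₁, z₂₃, z₃₁, z₃₂`. -/
noncomputable def presGens : Fin 8 → R0 :=
  ![Sgen, Tgen, Pgen 0 1, Pgen 0 2, Pgen 1 0, Pgen 1 2, Pgen 2 0, Pgen 2 1]

/-- The `ℂ`-algebra map `ψ : ℂ[z_S, z_T, z₁₂, z₁₃, z₂₁, z₂₃, z₃₁, z₃₂] → R₀/I`
sending the variables to the residue classes of `S, T` and the `P_{ij}`. -/
noncomputable def psiPres : MvPolynomial (Fin 8) ℂ →ₐ[ℂ] R0 ⧸ Iid :=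
  MvPolynomial.aeval fun i => Ideal.Quotient.mk Iid (presGens i)

theorem MvPolynomial.dvd_of_eval_eq_zero_of_prime {k σ : Type*} [Field k] [IsAlgClosed k]
    [Finite σ] {f g h : MvPolynomial σ k} (hf : Prime f) (hh : ¬ f ∣ h)
    (H : ∀ z : σ → k, eval z f = 0 → eval z h ≠ 0 → eval z g = 0) : f ∣ g := by
  have hvan : h * g ∈ vanishingIdeal k (zeroLocus k (Ideal.span {f})) := by
    intro z hz
    have hfz : eval z f = 0 := by simpa using hz f (Ideal.mem_span_singleton_self f)
    by_cases hhz : eval z h = 0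
    · simp [hhz]
    · simp [H z hfz hhz]
  have := (Ideal.span_singleton_prime hf.ne_zero).mpr hf
  rw [IsPrime.vanishingIdeal_zeroLocus, Ideal.mem_span_singleton] at hvan
  exact (hf.dvd_or_dvd hvan).resolve_left hh

noncomputable def cubicRelation : MvPolynomial (Fin 8) ℂ :=
  X 0 * X 1 - X 2 * X 5 * X 6 - X 3 * X 4 * X 7

theorem cubicRelation_prime : Prime cubicRelation := by
  set g : MvPolynomial (Fin 8) ℂ := -(X 2 * X 5 * X 6 + X 3 * X 4 * X 7) with hg
  have hrel : cubicRelation = X 1 * X 0 + g := by rw [cubicRelation, hg]; ring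
  have hX (j : Fin 8) (hj : j ≠ 0) : 0 ∉ (X j : MvPolynomial (Fin 8) ℂ).vars := by
    simpa [vars_X] using hj.symm
  have hmul (p q : MvPolynomial (Fin 8) ℂ) (hp : 0 ∉ p.vars) (hq : 0 ∉ q.vars) :
      0 ∉ (p * q).vars := fun h => by simpa [hp, hq] using vars_mul p q h
  have hadd (p q : MvPolynomial (Fin 8) ℂ) (hp : 0 ∉ p.vars) (hq : 0 ∉ q.vars) :
      0 ∉ (p + q).vars := fun h => by simpa [hp, hq] using vars_add_subset p q h
  have hg0 : 0 ∉ g.vars := by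
    rw [hg, vars_neg]
    exact hadd _ _ (hmul _ _ (hmul _ _ (hX 2 (by decide)) (hX 5 (by decide))) (hX 6 (by decide)))
      (hmul _ _ (hmul _ _ (hX 3 (by decide)) (hX 4 (by decide))) (hX 7 (by decide)))
  have hcop : IsRelPrime (X 1) g := by
    refine X_prime.irreducible.isRelPrime_iff_not_dvd.mpr fun ⟨q, hq⟩ => ?_
    have := congrArg (eval ![1, 0, 1, 1, 1, 1, 1, 1]) hq
    simp [hg, Matrix.cons_val] at this
  rw [hrel, ← UniqueFactorizationMonoid.irreducible_iff_prime]
  exact irreducible_mul_X_add _ _ _ (X_ne_zero _) (by simp [vars_X]) hg0 hcop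

theorem Sgen_mul_Tgen : Sgen * Tgen = (Matrix.of Pgen).det := by
  rw [Sgen, Tgen, ← Matrix.det_transpose, ← Matrix.det_mul]
  rfl

theorem aeval_presGens_cubicRelation_mem : aeval presGens cubicRelation ∈ Iid := by
  have hdet : aeval presGens cubicRelation =
      Pgen 0 0 * (Pgen 1 1 * Pgen 2 2 - Pgen 1 2 * Pgen 2 1)
        - Pgen 1 1 * (Pgen 0 2 * Pgen 2 0) - Pgen 2 2 * (Pgen 0 1 * Pgen 1 0) := by
    simp only [cubicRelation, map_sub, map_mul, aeval_X, presGens, Matrix.cons_val,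
      Sgen_mul_Tgen, Matrix.det_fin_three, Matrix.of_apply]
    ring
  have hdiag (i : Fin 3) : Pgen i i ∈ Iid := by
    fin_cases i <;> exact Ideal.subset_span (by simp)
  rw [hdet]
  exact Iid.sub_mem (Iid.sub_mem (Iid.mul_mem_right _ (hdiag 0)) (Iid.mul_mem_right _ (hdiag 1)))
    (Iid.mul_mem_right _ (hdiag 2))

theorem mem_ker_psiPres_iff (g : MvPolynomial (Fin 8) ℂ) :
    g ∈ RingHom.ker psiPres ↔ aeval presGens g ∈ Iid := by
  rw [RingHom.mem_ker, ← Ideal.Quotient.eq_zero_iff_mem]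
  exact Eq.congr_left (comp_aeval_apply (f := presGens) (Ideal.Quotient.mkₐ ℂ Iid) g).symm

noncomputable def gramLift (d : Fin 3 → ℂ) (M : Matrix (Fin 3) (Fin 3) ℂ) :
    (Fin 3 × Fin 3) ⊕ (Fin 3 × Fin 3) → ℂ :=
  Sum.elim (fun p => Matrix.diagonal d p.1 p.2) (fun p => M p.2 p.1 / d p.2)

section gramLift

variable {d : Fin 3 → ℂ} (M : Matrix (Fin 3) (Fin 3) ℂ)

theorem eval_gramLift_Pgen (hd : ∀ i, d i ≠ 0) (i j : Fin 3) :
    eval (gramLift d M) (Pgen i j) = M i j := by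
  simp only [gramLift, Matrix.diagonal_apply, Pgen, map_sum, map_mul, eval_X, Sum.elim_inl,
    Sum.elim_inr, ite_mul, zero_mul, Finset.sum_ite_eq, Finset.mem_univ, if_true]
  exact mul_div_cancel₀ _ (hd i)

theorem eval_gramLift_Sgen : eval (gramLift d M) Sgen = ∏ i, d i := by
  rw [Sgen, RingHom.map_det, ← Matrix.det_diagonal, ← Matrix.diagonal_transpose]
  congr 1
  ext k i
  simp [gramLift]

theorem eval_gramLift_Sgen_mul_Tgen (hd : ∀ i, d i ≠ 0) :
    eval (gramLift d M) Sgen * eval (gramLift d M) Tgen = M.det := by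
  rw [← map_mul, Sgen_mul_Tgen, RingHom.map_det]
  congr 1
  ext i j
  exact eval_gramLift_Pgen M hd i j

end gramLift

theorem exists_point_eval_presGens (z : Fin 8 → ℂ) (hz : eval z cubicRelation = 0)
    (hz0 : z 0 ≠ 0) :
    ∃ p, Iid ≤ RingHom.ker (eval p) ∧ ∀ i, eval p (presGens i) = z i := by
  set d : Fin 3 → ℂ := ![z 0, 1, 1]
  set M : Matrix (Fin 3) (Fin 3) ℂ := !![0, z 2, z 3; z 4, 0, z 5; z 6, z 7, 0]
  have hd : ∀ i, d i ≠ 0 := by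
    intro i; fin_cases i <;> simp [d, hz0]
  have hP := eval_gramLift_Pgen M hd
  have hS : eval (gramLift d M) Sgen = z 0 := by
    simp [eval_gramLift_Sgen, Fin.prod_univ_three, d]
  have hT : eval (gramLift d M) Tgen = z 1 := by
    have hST := eval_gramLift_Sgen_mul_Tgen M hd
    rw [hS, Matrix.det_fin_three] at hST
    simp only [cubicRelation, map_sub, map_mul, eval_X] at hz
    refine mul_left_cancel₀ hz0 ?_
    simp only [hST, M, Matrix.of_apply, Matrix.cons_val', Matrix.cons_val_zero,
      Matrix.cons_val_fin_one, Matrix.cons_val_one, Matrix.cons_val, mul_zero, zero_mul, sub_self,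
      zero_add, sub_zero]
    linear_combination -hz
  refine ⟨gramLift d M, ?_, ?_⟩
  · rw [Iid, Ideal.span_le]
    rintro q (rfl | rfl | rfl) <;> simp [hP, M]
  · intro i
    fin_cases i <;> simp [presGens, hS, hT, hP, M]

theorem eval_eq_zero_of_mem_ker_psiPres {g : MvPolynomial (Fin 8) ℂ}
    (hg : g ∈ RingHom.ker psiPres) (z : Fin 8 → ℂ) (hz : eval z cubicRelation = 0)
    (hz0 : z 0 ≠ 0) : eval z g = 0 := by
  obtain ⟨p, hI, hp⟩ := exists_point_eval_presGens z hz hz0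
  have hcomp := comp_aeval_apply presGens (aeval p) g
  simp only [aeval_eq_eval, hp] at hcomp
  rw [← hcomp]
  exact hI ((mem_ker_psiPres_iff g).mp hg)

theorem stmt_17 :
    RingHom.ker psiPres =
      Ideal.span {(X 0 * X 1 - X 2 * X 5 * X 6 - X 3 * X 4 * X 7 :
        MvPolynomial (Fin 8) ℂ)} := by
  change _ = Ideal.span {cubicRelation}
  refine le_antisymm (fun g hg => ?_) ?_
  · have hX0 : ¬ cubicRelation ∣ X 0 := fun ⟨q, hq⟩ => by
      simpa [cubicRelation] using congrArg (eval (Pi.single 0 1)) hq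
    exact Ideal.mem_span_singleton.mpr <| dvd_of_eval_eq_zero_of_prime cubicRelation_prime hX0
      fun z hz hz0 => eval_eq_zero_of_mem_ker_psiPres hg z hz (by simpa using hz0)
  · rw [Ideal.span_le, Set.singleton_subset_iff, SetLike.mem_coe, mem_ker_psiPres_iff]
    exact aeval_presGens_cubicRelation_mem
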